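/- Let m ≥ 2 be an integer, let μ ∈ {0,1}^{m−1}, and let θ = (2/3)·(1 + Σ_{i=1}^{m−1} μ_i / 3^{m−i}). Then every element (z, f, s, t, u) of Slex(m, θ) satisfies z_m = 1 and z_i = μ_i for every i = 1,…,m−1. -/

import Mathlib

noncomputable section

/-- The tuple type `(z, f, s, t, u)` of five vectors in `ℝ^m`. -/
abbrev Tup (m : ℕ) : Type :=
  (Fin m → ℝ) × (Fin m → ℝ) × (Fin m → ℝ) × (Fin m → ℝ) × (Fin m → ℝ)

def Tz {m : ℕ} (p : Tup m) : Fin m → ℝ := p.1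
def Tf {m : ℕ} (p : Tup m) : Fin m → ℝ := p.2.1
def Ts {m : ℕ} (p : Tup m) : Fin m → ℝ := p.2.2.1
def Tt {m : ℕ} (p : Tup m) : Fin m → ℝ := p.2.2.2.1
def Tu {m : ℕ} (p : Tup m) : Fin m → ℝ := p.2.2.2.2

/-- The feasible set `Flex(m, θ)`. -/
def Flex (m : ℕ) (θ : ℝ) : Set (Tup m) :=
  { p | (∀ i : Fin m, i.val = m - 1 → Tu p i = θ) ∧
        (∀ i : Fin m,
          (3 / 2) * Tu p i - 1 / 2 ≤ Ts p i ∧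
          (3 / 2) * Tu p i - 1 ≤ Tt p i ∧
          Tz p i = 2 * (Ts p i - Tt p i) ∧
          -(Tf p i) ≤ Tz p i - 1 / 2 ∧ Tz p i - 1 / 2 ≤ Tf p i ∧
          0 ≤ Tz p i ∧ Tz p i ≤ 1 ∧ 0 ≤ Tf p i ∧ Tf p i ≤ 1 ∧
          0 ≤ Ts p i ∧ Ts p i ≤ 1 ∧ 0 ≤ Tt p i ∧ Tt p i ≤ 1 ∧
          0 ≤ Tu p i ∧ Tu p i ≤ 1) ∧
        (∀ i : Fin m, 1 ≤ i.val →
          Tu p ⟨i.val - 1, Nat.lt_of_le_of_lt (Nat.sub_le _ _) i.isLt⟩ =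
            3 * Tu p i - 2 * Tz p i) }

/-- The set of minimizers of `g` over `S`. -/
def argminOn {α : Type} (g : α → ℝ) (S : Set α) : Set α :=
  {x ∈ S | ∀ y ∈ S, g x ≤ g y}

/-- The lexicographic optimal set `Slex(m, θ)`: first minimize `s_m + t_m`, then
`s_{m-1} + t_{m-1}`, …, then `s_1 + t_1`, and finally `∑ f_i` over `Flex(m, θ)`. -/
def Slex (m : ℕ) (θ : ℝ) : Set (Tup m) :=
  argminOn (fun p => ∑ i : Fin m, Tf p i)
    ((List.finRange m).reverse.foldl
      (fun S i => argminOn (fun p => Ts p i + Tt p i) S) (Flex m θ))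

namespace Stmt8Aux

/-- `μ` extended by the value `1` at all indices `≥ m-1`. -/
def nu (m : ℕ) (μ : Fin (m-1) → ℝ) : ℕ → ℝ :=
  fun i => if h : i < m - 1 then μ ⟨i, h⟩ else 1

/-- The intended value of `u` at (0-based) index `j`. -/
def Vv (m : ℕ) (μ : Fin (m-1) → ℝ) : ℕ → ℝ :=
  fun j => (2 / 3 ^ (j+1)) * ∑ i ∈ Finset.range (j+1), nu m μ i * 3 ^ i

/-- The intended value of `s` at index `j`. -/
def sstar (m : ℕ) (μ : Fin (m-1) → ℝ) : ℕ → ℝ :=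
  fun j => if nu m μ j = 1 then (3/2) * Vv m μ j - 1/2 else 0

/-- The intended value of `t` at index `j`. -/
def tstar (m : ℕ) (μ : Fin (m-1) → ℝ) : ℕ → ℝ :=
  fun j => if nu m μ j = 1 then (3/2) * Vv m μ j - 1 else 0

/-- The canonical optimal point. -/
def pstar (m : ℕ) (μ : Fin (m-1) → ℝ) : Tup m :=
  (fun j => nu m μ j.val, fun _ => 1/2, fun j => sstar m μ j.val,
   fun j => tstar m μ j.val, fun j => Vv m μ j.val)

variable {m : ℕ} {μ : Fin (m-1) → ℝ}

theorem nu01 (hμ : ∀ i, μ i = 0 ∨ μ i = 1) (i : ℕ) : nu m μ i = 0 ∨ nu m μ i = 1 := by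
  unfold nu; split
  · exact hμ _
  · right; rfl

theorem Vrec (j : ℕ) : Vv m μ j = 3 * Vv m μ (j+1) - 2 * nu m μ (j+1) := by
  unfold Vv
  rw [Finset.sum_range_succ (n := j+1)]
  have h3 : (3:ℝ) ^ (j+1) > 0 := by positivity
  field_simp
  ring

theorem Vnonneg (hμ : ∀ i, μ i = 0 ∨ μ i = 1) (j : ℕ) : 0 ≤ Vv m μ j := by
  unfold Vv
  have : 0 ≤ ∑ i ∈ Finset.range (j+1), nu m μ i * 3 ^ i := by
    apply Finset.sum_nonneg
    intro i _
    rcases nu01 hμ i with h | h <;> rw [h] <;> positivity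
  positivity

theorem sum_le (hμ : ∀ i, μ i = 0 ∨ μ i = 1) (n : ℕ) :
    ∑ i ∈ Finset.range n, nu m μ i * 3 ^ i ≤ (3 ^ n - 1) / 2 := by
  have h : ∑ i ∈ Finset.range n, nu m μ i * 3 ^ i ≤ ∑ i ∈ Finset.range n, (3:ℝ) ^ i := by
    apply Finset.sum_le_sum
    intro i _
    rcases nu01 hμ i with h | h <;> rw [h] <;> nlinarith [pow_pos (by norm_num : (0:ℝ) < 3) i]
  calc _ ≤ ∑ i ∈ Finset.range n, (3:ℝ) ^ i := h
    _ = (3 ^ n - 1) / 2 := by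
        rw [geom_sum_eq (by norm_num)]; norm_num

theorem Vle1 (hμ : ∀ i, μ i = 0 ∨ μ i = 1) (j : ℕ) : Vv m μ j ≤ 1 := by
  unfold Vv
  have h := sum_le hμ (m := m) (μ := μ) (j+1)
  have h3 : (0:ℝ) < 3 ^ (j+1) := by positivity
  rw [div_mul_eq_mul_div, div_le_one h3]
  nlinarith

theorem Vhigh (hμ : ∀ i, μ i = 0 ∨ μ i = 1) (j : ℕ) (h : nu m μ j = 1) : 2/3 ≤ Vv m μ j := by
  unfold Vv
  have hs : nu m μ j * 3 ^ j ≤ ∑ i ∈ Finset.range (j+1), nu m μ i * 3 ^ i := by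
    apply Finset.single_le_sum (f := fun i => nu m μ i * 3 ^ i)
    · intro i _
      rcases nu01 hμ i with h' | h' <;> rw [h'] <;> positivity
    · simp
  rw [h, one_mul] at hs
  have h3 : (0:ℝ) < 3 ^ (j+1) := by positivity
  rw [div_mul_eq_mul_div, le_div_iff₀ h3]
  have : (3:ℝ) ^ (j+1) = 3 * 3 ^ j := by ring
  nlinarith [pow_pos (by norm_num : (0:ℝ) < 3) j]

theorem Vlow (hμ : ∀ i, μ i = 0 ∨ μ i = 1) (j : ℕ) (h : nu m μ j = 0) : Vv m μ j ≤ 1/3 := by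
  unfold Vv
  rw [Finset.sum_range_succ, h, zero_mul, add_zero]
  have hs := sum_le hμ (m := m) (μ := μ) j
  have h3 : (0:ℝ) < 3 ^ (j+1) := by positivity
  rw [div_mul_eq_mul_div, div_le_iff₀ h3]
  have : (3:ℝ) ^ (j+1) = 3 * 3 ^ j := by ring
  nlinarith [pow_pos (by norm_num : (0:ℝ) < 3) j]

theorem Vtheta (hm : 2 ≤ m) :
    Vv m μ (m-1) = (2 / 3) * (1 + ∑ i : Fin (m - 1), μ i / 3 ^ (m - 1 - i.val)) := by
  unfold Vv
  rw [Nat.sub_add_cancel (by omega : 1 ≤ m)]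
  have hfin : ∑ i : Fin (m - 1), μ i / 3 ^ (m - 1 - i.val)
      = ∑ i ∈ Finset.range (m-1), nu m μ i / 3 ^ (m - 1 - i) := by
    rw [← Fin.sum_univ_eq_sum_range (fun i => nu m μ i / 3 ^ (m - 1 - i)) (m-1)]
    apply Finset.sum_congr rfl
    intro i _
    congr 1
    unfold nu
    rw [dif_pos i.isLt]
  rw [hfin]
  have hsplit : ∑ i ∈ Finset.range m, nu m μ i * 3 ^ i
      = (∑ i ∈ Finset.range (m-1), nu m μ i * 3 ^ i) + 3 ^ (m-1) := by
    rw [show Finset.range m = Finset.range ((m-1)+1) by congr 1; omega,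
      Finset.sum_range_succ]
    have : nu m μ (m-1) = 1 := by unfold nu; rw [dif_neg (by omega)]
    rw [this, one_mul]
  rw [hsplit, mul_add, Finset.mul_sum]
  have hlast : 2 / (3:ℝ) ^ m * 3 ^ (m-1) = 2/3 := by
    have h3 : (3:ℝ) ^ m = 3 ^ (m-1) * 3 := by
      rw [← pow_succ]; congr 1; omega
    rw [h3]
    have : (0:ℝ) < 3 ^ (m-1) := by positivity
    field_simp
  have hterm : ∀ i ∈ Finset.range (m-1),
      2 / (3:ℝ) ^ m * (nu m μ i * 3 ^ i) = 2 / 3 * (nu m μ i / 3 ^ (m - 1 - i)) := by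
    intro i hi
    have hi' : i < m - 1 := Finset.mem_range.mp hi
    have h3 : (3:ℝ) ^ m = 3 ^ (m-1-i) * 3 ^ i * 3 := by
      rw [← pow_add, ← pow_succ]; congr 1; omega
    rw [h3]
    have p1 : (0:ℝ) < 3 ^ (m-1-i) := by positivity
    have p2 : (0:ℝ) < 3 ^ i := by positivity
    field_simp
  rw [Finset.sum_congr rfl hterm, hlast, ← Finset.mul_sum]
  ring

theorem two_st (hμ : ∀ i, μ i = 0 ∨ μ i = 1) (j : ℕ) :
    2 * (sstar m μ j - tstar m μ j) = nu m μ j := by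
  unfold sstar tstar
  rcases nu01 hμ j with h | h
  · rw [if_neg (by rw [h]; norm_num), if_neg (by rw [h]; norm_num), h]; ring
  · rw [if_pos h, if_pos h, h]; ring

theorem pstar_mem (hμ : ∀ i, μ i = 0 ∨ μ i = 1) {θ : ℝ} (hθV : θ = Vv m μ (m-1)) :
    pstar m μ ∈ Flex m θ := by
  refine ⟨?_, ?_, ?_⟩
  · intro i hi
    show Vv m μ i.val = θ
    rw [hθV, hi]
  · intro i
    have hV0 := Vnonneg hμ i.val
    have hV1 := Vle1 hμ i.val
    show (3/2) * Vv m μ i.val - 1/2 ≤ sstar m μ i.val ∧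
      (3/2) * Vv m μ i.val - 1 ≤ tstar m μ i.val ∧
      nu m μ i.val = 2 * (sstar m μ i.val - tstar m μ i.val) ∧
      -(1/2 : ℝ) ≤ nu m μ i.val - 1/2 ∧ nu m μ i.val - 1/2 ≤ 1/2 ∧
      0 ≤ nu m μ i.val ∧ nu m μ i.val ≤ 1 ∧ (0:ℝ) ≤ 1/2 ∧ (1/2:ℝ) ≤ 1 ∧
      0 ≤ sstar m μ i.val ∧ sstar m μ i.val ≤ 1 ∧
      0 ≤ tstar m μ i.val ∧ tstar m μ i.val ≤ 1 ∧
      0 ≤ Vv m μ i.val ∧ Vv m μ i.val ≤ 1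
    have hz := two_st hμ (m := m) (μ := μ) i.val
    unfold sstar tstar at *
    rcases nu01 hμ i.val with h | h
    · have hlow := Vlow hμ i.val h
      rw [if_neg (by rw [h]; norm_num), if_neg (by rw [h]; norm_num)] at *
      rw [h]
      refine ⟨?_,?_,?_,?_,?_,?_,?_,?_,?_,?_,?_,?_,?_,?_,?_⟩ <;> linarith
    · have hhigh := Vhigh hμ i.val h
      rw [if_pos h, if_pos h] at *
      rw [h]
      refine ⟨?_,?_,?_,?_,?_,?_,?_,?_,?_,?_,?_,?_,?_,?_,?_⟩ <;> linarith
  · intro i hi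
    show Vv m μ (i.val - 1) = 3 * Vv m μ i.val - 2 * nu m μ i.val
    have h := Vrec (m := m) (μ := μ) (i.val - 1)
    rwa [Nat.sub_add_cancel hi] at h

/-- The invariant after having processed all indices `≥ k`. -/
def Inv (m : ℕ) (μ : Fin (m-1) → ℝ) (θ : ℝ) (k : ℕ) (S : Set (Tup m)) : Prop :=
  pstar m μ ∈ S ∧ S ⊆ Flex m θ ∧
    ∀ p ∈ S, (∀ j : Fin m, k ≤ j.val + 1 → Tu p j = Vv m μ j.val) ∧
             (∀ j : Fin m, k ≤ j.val → Ts p j = sstar m μ j.val ∧ Tt p j = tstar m μ j.val)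

theorem inv_base (hμ : ∀ i, μ i = 0 ∨ μ i = 1) {θ : ℝ} (hθV : θ = Vv m μ (m-1)) :
    Inv m μ θ m (Flex m θ) := by
  refine ⟨pstar_mem hμ hθV, le_refl _, ?_⟩
  intro p hp
  constructor
  · intro j hj
    have hj' : j.val = m - 1 := by omega
    rw [hp.1 j hj', hθV, hj']
  · intro j hj
    exact absurd j.isLt (by omega)

theorem inv_step (hμ : ∀ i, μ i = 0 ∨ μ i = 1) {θ : ℝ} (k : ℕ) (hk : k < m)
    (S : Set (Tup m)) (h : Inv m μ θ (k+1) S) :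
    Inv m μ θ k (argminOn (fun p => Ts p ⟨k, hk⟩ + Tt p ⟨k, hk⟩) S) := by
  obtain ⟨hps, hsub, hinv⟩ := h
  set K : Fin m := ⟨k, hk⟩ with hK
  have hKv : K.val = k := rfl
  have hmin : ∀ q ∈ S, sstar m μ k + tstar m μ k ≤ Ts q K + Tt q K := by
    intro q hq
    have huq : Tu q K = Vv m μ k := (hinv q hq).1 K (by omega)
    obtain ⟨h1, h2, _, _, _, _, _, _, _, hs0, _, ht0, _, _, _⟩ := (hsub hq).2.1 K
    rw [huq] at h1 h2
    unfold sstar tstar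
    rcases nu01 hμ k with h | h
    · rw [if_neg (by rw [h]; norm_num), if_neg (by rw [h]; norm_num)]; linarith
    · rw [if_pos h, if_pos h]; linarith
  have hps' : pstar m μ ∈ argminOn (fun p => Ts p K + Tt p K) S := by
    refine ⟨hps, fun q hq => ?_⟩
    show sstar m μ K.val + tstar m μ K.val ≤ Ts q K + Tt q K
    exact hmin q hq
  refine ⟨hps', fun p hp => hsub hp.1, ?_⟩
  intro p hp
  obtain ⟨hpS, hopt⟩ := hp
  have hIH := hinv p hpS
  have huk : Tu p K = Vv m μ k := hIH.1 K (by omega)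
  have hstk : Ts p K = sstar m μ k ∧ Tt p K = tstar m μ k := by
    have hle : Ts p K + Tt p K ≤ sstar m μ k + tstar m μ k := hopt (pstar m μ) hps
    obtain ⟨h1, h2, _, _, _, _, _, _, _, hs0, _, ht0, _, _, _⟩ := (hsub hpS).2.1 K
    rw [huk] at h1 h2
    unfold sstar tstar at hle ⊢
    rcases nu01 hμ k with h | h
    · rw [if_neg (by rw [h]; norm_num), if_neg (by rw [h]; norm_num)] at hle ⊢
      constructor <;> linarith
    · have hV := Vhigh hμ k h
      rw [if_pos h, if_pos h] at hle ⊢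
      constructor <;> linarith
  have hzk : Tz p K = nu m μ k := by
    have hz := ((hsub hpS).2.1 K).2.2.1
    rw [hz, hstk.1, hstk.2, two_st hμ]
  constructor
  · intro j hj
    rcases Nat.lt_or_ge j.val k with hlt | hge
    · have hk1 : 1 ≤ k := by omega
      have hrec := (hsub hpS).2.2 K hk1
      rw [huk, hzk] at hrec
      have hVr := Vrec (m := m) (μ := μ) (k-1)
      rw [Nat.sub_add_cancel hk1] at hVr
      have hj' : j = ⟨K.val - 1, Nat.lt_of_le_of_lt (Nat.sub_le _ _) K.isLt⟩ := by
        apply Fin.ext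
        show j.val = K.val - 1
        rw [hKv]
        omega
      rw [hj', hrec]
      exact hVr.symm
    · exact hIH.1 j (by omega)
  · intro j hj
    rcases Nat.lt_or_ge j.val (k+1) with hlt | hge
    · have : j = K := by apply Fin.ext; show j.val = k; omega
      rw [this]
      exact hstk
    · exact hIH.2 j (by omega)

theorem inv_fold (hμ : ∀ i, μ i = 0 ∨ μ i = 1) {θ : ℝ} (hθV : θ = Vv m μ (m-1)) :
    Inv m μ θ 0 ((List.finRange m).reverse.foldl
      (fun S i => argminOn (fun p => Ts p i + Tt p i) S) (Flex m θ)) := by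
  rw [List.foldl_reverse]
  have key : ∀ d, d ≤ m → Inv m μ θ (m - d)
      (List.foldr (fun i S => argminOn (fun p => Ts p i + Tt p i) S) (Flex m θ)
        ((List.finRange m).drop (m - d))) := by
    intro d
    induction d with
    | zero =>
      intro _
      rw [Nat.sub_zero, List.drop_of_length_le (by simp)]
      exact inv_base hμ hθV
    | succ d ih =>
      intro hd
      have hk : m - (d+1) < m := by omega
      have hdrop : (List.finRange m).drop (m - (d+1))
          = ⟨m - (d+1), hk⟩ :: (List.finRange m).drop (m - (d+1) + 1) := by
        rw [List.drop_eq_getElem_cons (by simpa using hk)]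
        simp
      rw [hdrop, List.foldr_cons]
      have h1 : m - (d+1) + 1 = m - d := by omega
      have hih := ih (by omega)
      rw [← h1] at hih
      exact inv_step hμ (θ := θ) (m - (d+1)) hk _ hih
  have := key m le_rfl
  rw [Nat.sub_self, List.drop_zero] at this
  exact this

end Stmt8Aux

open Stmt8Aux in
/-- let `m ≥ 2`, `μ ∈ {0,1}^{m−1}` and
`θ = (2/3)(1 + Σ_{i=1}^{m−1} μ_i / 3^{m−i})`.  Then every element `(z, f, s, t, u)` of
`Slex(m, θ)` satisfies `z_m = 1` and `z_i = μ_i` for every `i = 1, …, m−1`. -/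
theorem stmt8 (m : ℕ) (hm : 2 ≤ m) (μ : Fin (m - 1) → ℝ)
    (hμ : ∀ i, μ i = 0 ∨ μ i = 1)
    (θ : ℝ) (hθ : θ = (2 / 3) * (1 + ∑ i : Fin (m - 1), μ i / 3 ^ (m - 1 - i.val))) :
    ∀ p ∈ Slex m θ, ∀ i : Fin m,
      (i.val = m - 1 → Tz p i = 1) ∧ (∀ h : i.val < m - 1, Tz p i = μ ⟨i.val, h⟩) := by
  have hθV : θ = Vv m μ (m-1) := by rw [hθ, Vtheta hm]
  intro p hp i
  obtain ⟨hpT, -⟩ := hp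
  obtain ⟨-, hsub, hinv⟩ := inv_fold hμ hθV
  have hst := (hinv p hpT).2 i (Nat.zero_le _)
  have hz : Tz p i = nu m μ i.val := by
    have hzeq := ((hsub hpT).2.1 i).2.2.1
    rw [hzeq, hst.1, hst.2, two_st hμ]
  constructor
  · intro hi
    rw [hz]
    unfold nu
    rw [dif_neg (by omega)]
  · intro h
    rw [hz]
    unfold nu
    rw [dif_pos h]
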